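/- arXiv:2208.00989 — 3 statements merged into one kernel-verified Lean document; each statement's English description precedes it below -/
import Mathlib

section
/- In the m-truncated t-free Fock space, the creation and annihilation operators satisfy a_i a_j^† = δ_{ij}(P_Ω + t·Σ_{h=1}^{m-1} P_h), where P_h is the orthogonal projection onto the h-particle subspace and P_Ω onto the vacuum. -/
noncomputable section

/-- Words of length at most `m`: basis indexing the `m`-truncated Fock space over `ℓ²(ℤ)`. -/
abbrev TWord (m : ℕ) := {w : List ℤ // w.length ≤ m}

/-- The `m`-truncated `t`-free Fock space (as a vector space, spanned by the basis of words
of length at most `m`; the word `[i₁, …, iₖ]` stands for `e_{i₁} ⊗ ⋯ ⊗ e_{iₖ}`, and `[]`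
for the vacuum `Ω`). -/
abbrev TFock (m : ℕ) := TWord m →₀ ℂ

/-- The truncated creation operator `a_i^†`. -/
noncomputable def cre (m : ℕ) (i : ℤ) : TFock m →ₗ[ℂ] TFock m :=
  Finsupp.lift (TFock m) ℂ (TWord m) (fun w =>
    if h : w.val.length + 1 ≤ m then
      Finsupp.single ⟨i :: w.val, by simpa using h⟩ 1
    else 0)

/-- The truncated annihilation operator `a_i`. -/
noncomputable def ann (m : ℕ) (t : ℝ) (i : ℤ) : TFock m →ₗ[ℂ] TFock m :=
  Finsupp.lift (TFock m) ℂ (TWord m) (fun w =>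
    match w with
    | ⟨[], _⟩ => 0
    | ⟨j :: w', hw⟩ =>
        if j = i then (if w' = [] then (1 : ℂ) else (t : ℂ)) •
          Finsupp.single (⟨w', by simpa using Nat.le_of_succ_le hw⟩ : TWord m) 1
        else 0)

/-- The orthogonal projection `P_h` onto the `h`-particle subspace. -/
noncomputable def lvl (m : ℕ) (h : ℕ) : TFock m →ₗ[ℂ] TFock m :=
  Finsupp.lift (TFock m) ℂ (TWord m) (fun w =>
    if w.val.length = h then Finsupp.single w 1 else 0)

/-! Both sides are diagonal in the basis of words. On a word `w` of length `< m`, `a_j^†`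
prepends `j` and `a_i` removes it again, with the factor `δ_{ij}` and the factor `t` unless the
word left over is the vacuum; on a word of the top length `m`, `a_j^†` vanishes, matching the
absence of `P_m` on the right. -/

namespace TFock

variable {m : ℕ}

open Finsupp

theorem cre_single (i : ℤ) (w : TWord m) (c : ℂ) :
    cre m i (single w c) =
      if h : w.val.length + 1 ≤ m then single ⟨i :: w.val, by simpa using h⟩ c else 0 := by
  rw [cre, lift_apply, sum_single_index (by simp)]
  split_ifs <;> simp

theorem ann_single_cons (t : ℝ) (i j : ℤ) (w : List ℤ) (hw : (j :: w).length ≤ m) (c : ℂ) :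
    ann m t i (single ⟨j :: w, hw⟩ c) =
      if j = i then (if w = [] then (1 : ℂ) else (t : ℂ)) •
        single ⟨w, by simpa using Nat.le_of_succ_le hw⟩ c else 0 := by
  rw [ann, lift_apply, sum_single_index (by simp)]
  simp only [ite_smul, one_smul, smul_ite, smul_zero, smul_single, smul_eq_mul, mul_one]
  congr 2
  rw [mul_comm]

theorem lvl_single (h : ℕ) (w : TWord m) (c : ℂ) :
    lvl m h (single w c) = if w.val.length = h then single w c else 0 := by
  rw [lvl, lift_apply, sum_single_index (by simp)]
  split_ifs <;> simp

theorem ann_cre_single (t : ℝ) (i j : ℤ) (w : TWord m) (c : ℂ) :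
    ann m t i (cre m j (single w c)) =
      if i = j then
        (if w.val.length < m then (if w.val = [] then (1 : ℂ) else (t : ℂ)) • single w c else 0)
      else 0 := by
  obtain ⟨w, hw⟩ := w
  rw [cre_single]
  dsimp only
  by_cases hlen : w.length < m
  · rw [dif_pos (Nat.succ_le_of_lt hlen), ann_single_cons, if_pos hlen]
    simp only [eq_comm (a := j)]
  · rw [dif_neg (by omega), map_zero, if_neg hlen, ite_self]

theorem lvl_zero_add_smul_sum_lvl_single (hm : 1 ≤ m) (t : ℂ) (w : TWord m) (c : ℂ) :
    (lvl m 0 + t • ∑ h ∈ Finset.Icc 1 (m - 1), lvl m h) (single w c) =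
      if w.val.length < m then (if w.val = [] then 1 else t) • single w c else 0 := by
  simp only [LinearMap.add_apply, LinearMap.smul_apply, LinearMap.sum_apply, lvl_single,
    Finset.sum_ite_eq, Finset.mem_Icc, ← List.length_eq_zero_iff]
  split_ifs <;> first | omega | simp only [add_zero, zero_add, smul_zero, one_smul]

end TFock

theorem stmt8_general (t : ℝ) (m : ℕ) (hm : 1 ≤ m) (i j : ℤ) :
    (ann m t i) ∘ₗ (cre m j) =
      (if i = j then (1 : ℂ) else 0) •
        (lvl m 0 + (t : ℂ) • ∑ h ∈ Finset.Icc 1 (m - 1), lvl m h) := by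
  refine Finsupp.lhom_ext fun w c => ?_
  rw [LinearMap.comp_apply, TFock.ann_cre_single, LinearMap.smul_apply,
    TFock.lvl_zero_add_smul_sum_lvl_single hm]
  split_ifs <;> simp only [one_smul, zero_smul]

/-- In the `m`-truncated `t`-free Fock space,
`a_i a_j^† = δ_{ij} (P_Ω + t·Σ_{h=1}^{m−1} P_h)`. -/
theorem stmt8 (t : ℝ) (ht : 0 < t) (m : ℕ) (hm : 1 ≤ m) (i j : ℤ) :
    (ann m t i) ∘ₗ (cre m j) =
      (if i = j then (1 : ℂ) else 0) •
        (lvl m 0 + (t : ℂ) • ∑ h ∈ Finset.Icc 1 (m - 1), lvl m h) :=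
  stmt8_general t m hm i j
end
end

section
/- Let A be a unital C*-algebra and Φ a *-automorphism of A such that for every a in a dense *-subalgebra, the Cesàro averages (1/n)Σ_{k=0}^{n-1}Φ^k(a) converge in norm. Then the limit map E(a) = lim_n (1/n)Σ_{k<n}Φ^k(a) extends to a norm-one projection (conditional expectation) from A onto the fixed-point subalgebra A^Φ = {a : Φ(a) = a}. -/
/-!
The Cesàro averages of a linear isometry are uniformly 1-Lipschitz, so the set of points at which
they form a Cauchy sequence is closed; it contains a dense set, hence is everything, and by
completeness the averages converge pointwise. A pointwise limit of linear contractions is a linear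
contraction. The limit is `Φ`-invariant because the averages along the orbits of `Φ a` and of `a`
differ by `(Φⁿ a - a) / n`, and it fixes every fixed point of `Φ`; since it fixes `1`, its norm is
exactly `1`.
-/

open Filter Topology

theorem Equicontinuous.isClosed_setOf_cauchySeq {ι X α : Type*} [Nonempty ι] [SemilatticeSup ι]
    [TopologicalSpace X] [PseudoMetricSpace α] {F : ι → X → α} (hF : Equicontinuous F) :
    IsClosed {x | CauchySeq (F · x)} := by
  refine isClosed_of_closure_subset fun x hx => Metric.cauchySeq_iff.2 fun ε hε => ?_
  obtain ⟨y, hxy, hy⟩ :=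
    ((Metric.equicontinuousAt_iff_right.1 (hF x) (ε / 3) (by positivity)).and_frequently
      (mem_closure_iff_frequently.1 hx)).exists
  obtain ⟨N, hN⟩ := Metric.cauchySeq_iff.1 hy (ε / 3) (by positivity)
  refine ⟨N, fun m hm n hn => ?_⟩
  calc dist (F m x) (F n x)
      ≤ dist (F m x) (F m y) + dist (F m y) (F n y) + dist (F n y) (F n x) :=
        dist_triangle4 _ _ _ _
    _ < ε / 3 + ε / 3 + ε / 3 := by
        gcongr
        · exact hxy m
        · exact hN m hm n hn
        · rw [dist_comm]; exact hxy n
    _ = ε := by ring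

namespace LinearMap

variable {𝕜 E : Type*} [RCLike 𝕜] [NormedAddCommGroup E] [NormedSpace 𝕜 E]
  (f : E →ₗ[𝕜] E)

theorem birkhoffAverage_id_apply (n : ℕ) (x : E) :
    birkhoffAverage 𝕜 f _root_.id n x = ((n : 𝕜)⁻¹ • ∑ k ∈ Finset.range n, f ^ k) x := by
  simp [birkhoffAverage, birkhoffSum, Module.End.pow_apply]

variable {f}

theorem norm_iterate_apply_le (hf : LipschitzWith 1 f) (k : ℕ) (x : E) : ‖f^[k] x‖ ≤ ‖x‖ := by
  simpa [← Module.End.pow_apply] using (hf.iterate k).dist_le_mul x 0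

theorem norm_birkhoffAverage_id_le (hf : LipschitzWith 1 f) (n : ℕ) (x : E) :
    ‖birkhoffAverage 𝕜 f _root_.id n x‖ ≤ ‖x‖ := by
  rcases eq_or_ne n 0 with rfl | hn
  · simp
  calc ‖birkhoffAverage 𝕜 f _root_.id n x‖
      ≤ ‖(n : 𝕜)⁻¹‖ * ∑ k ∈ Finset.range n, ‖f^[k] x‖ := by
        rw [birkhoffAverage, norm_smul]
        gcongr
        exact norm_sum_le _ _
    _ ≤ ‖(n : 𝕜)⁻¹‖ * ∑ k ∈ Finset.range n, ‖x‖ := by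
        gcongr
        exact norm_iterate_apply_le hf _ _
    _ = ‖x‖ := by simp [hn]

theorem isFixedPt_of_tendsto_birkhoffAverage_id (hf : LipschitzWith 1 f) {x y : E}
    (h : Tendsto (birkhoffAverage 𝕜 f _root_.id · x) atTop (𝓝 y)) : Function.IsFixedPt f y := by
  have hbdd : Bornology.IsBounded (Set.range (_root_.id <| f^[·] x)) :=
    isBounded_iff_forall_norm_le.2 ⟨‖x‖, Set.forall_mem_range.2 (norm_iterate_apply_le hf · x)⟩
  have hshift : Tendsto (birkhoffAverage 𝕜 f _root_.id · (f x)) atTop (𝓝 y) := by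
    simpa using h.add (tendsto_birkhoffAverage_apply_sub_birkhoffAverage 𝕜 hbdd)
  have hcomm (n : ℕ) :
      f (birkhoffAverage 𝕜 f _root_.id n x) = birkhoffAverage 𝕜 f _root_.id n (f x) := by
    simp only [birkhoffAverage, birkhoffSum, map_smul, map_sum, _root_.id,
      ← Function.iterate_succ_apply' f, Function.iterate_succ_apply]
  refine tendsto_nhds_unique ?_ hshift
  simpa only [Function.comp_def, hcomm] using (hf.continuous.tendsto y).comp h

theorem exists_tendsto_birkhoffAverage_id_of_dense [CompleteSpace E] (hf : LipschitzWith 1 f)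
    {D : Set E} (hD : Dense D)
    (hconv : ∀ x ∈ D, ∃ y, Tendsto (birkhoffAverage 𝕜 f _root_.id · x) atTop (𝓝 y)) :
    ∃ P : E →L[𝕜] E, ‖P‖ ≤ 1 ∧
      ∀ x, Tendsto (birkhoffAverage 𝕜 f _root_.id · x) atTop (𝓝 (P x)) := by
  have hclosed := (uniformEquicontinuous_birkhoffAverage 𝕜 hf
    uniformContinuous_id).equicontinuous.isClosed_setOf_cauchySeq
  have hcauchy (x : E) : CauchySeq (birkhoffAverage 𝕜 f _root_.id · x) :=
    hclosed.closure_subset_iff.2 (fun y hy => (hconv y hy).elim fun _ h => h.cauchySeq) (hD x)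
  choose g hg using fun x => cauchySeq_tendsto_of_complete (hcauchy x)
  let P := linearMapOfTendsto (l := atTop) g
    (fun n : ℕ => (n : 𝕜)⁻¹ • ∑ k ∈ Finset.range n, f ^ k)
    (tendsto_pi_nhds.2 fun x => by simpa [birkhoffAverage_id_apply] using hg x)
  refine ⟨P.mkContinuous 1 fun x => ?_, mkContinuous_norm_le _ zero_le_one _, hg⟩
  rw [one_mul]
  exact le_of_tendsto (hg x).norm (Eventually.of_forall (norm_birkhoffAverage_id_le hf · x))

end LinearMap

/-- If `A` is a unital C*-algebra and `Φ` a *-automorphism such that the Cesàro averages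
`(1/n)Σ_{k<n} Φ^k(a)` converge in norm for every `a` in a dense *-subalgebra, then the
limit map extends to a norm-one projection (conditional expectation) from `A` onto the
fixed-point subalgebra `A^Φ`. -/
theorem stmt12 {A : Type*} [NormedRing A] [StarRing A] [CStarRing A] [NormedAlgebra ℂ A]
    [CompleteSpace A] [StarModule ℂ A] [Nontrivial A]
    (Φ : A ≃⋆ₐ[ℂ] A) (B : StarSubalgebra ℂ A) (hB : Dense (B : Set A))
    (hconv : ∀ a ∈ B, ∃ x : A,
      Tendsto (fun n : ℕ => (n : ℂ)⁻¹ • ∑ k ∈ Finset.range n, (⇑Φ)^[k] a)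
        atTop (𝓝 x)) :
    ∃ E : A →L[ℂ] A, ‖E‖ = 1 ∧
      (∀ a : A, Tendsto (fun n : ℕ => (n : ℂ)⁻¹ • ∑ k ∈ Finset.range n, (⇑Φ)^[k] a)
        atTop (𝓝 (E a))) ∧
      (∀ a : A, Φ (E a) = E a) ∧
      (∀ a : A, Φ a = a → E a = a) := by
  let _ : CStarAlgebra A := {}
  let f : A →ₗ[ℂ] A := Φ.toAlgEquiv.toLinearMap
  have hf : LipschitzWith 1 f := (StarAlgEquiv.isometry Φ).lipschitz
  obtain ⟨E, hE, hlim⟩ := f.exists_tendsto_birkhoffAverage_id_of_dense hf hB hconv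
  have hfix (a : A) (ha : Φ a = a) : E a = a :=
    tendsto_nhds_unique (hlim a) (Function.IsFixedPt.tendsto_birkhoffAverage ℂ ha id)
  refine ⟨E, le_antisymm hE ?_, hlim,
    fun a => f.isFixedPt_of_tendsto_birkhoffAverage_id hf (hlim a), hfix⟩
  simpa [hfix 1 (map_one Φ)] using E.le_opNorm 1
end

section
/- Let (A, Φ) be a C*-dynamical system that is uniquely ergodic with respect to the fixed-point algebra, i.e., E(a) := lim_n (1/n)Σ_{k<n}Φ^k(a) exists in norm for all a ∈ A. Then the restriction map ω ↦ ω∘ι from Φ-invariant states of A to states of A^Φ is an affine bijection, with inverse φ ↦ φ∘E. -/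
open Filter Topology

/-- The fixed-point subalgebra `A^Φ` of a *-automorphism `Φ`. -/
def fixedPts {A : Type*} [NormedRing A] [StarRing A] [NormedAlgebra ℂ A] [StarModule ℂ A]
    (Φ : A ≃⋆ₐ[ℂ] A) : StarSubalgebra ℂ A where
  carrier := {a | Φ a = a}
  mul_mem' {x y} hx hy := by
    simp only [Set.mem_setOf_eq] at *
    rw [map_mul, hx, hy]
  add_mem' {x y} hx hy := by
    simp only [Set.mem_setOf_eq] at *
    rw [map_add, hx, hy]
  algebraMap_mem' c := by
    simp only [Set.mem_setOf_eq, Algebra.algebraMap_eq_smul_one, map_smul, map_one]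
  star_mem' {x} hx := by
    simp only [Set.mem_setOf_eq] at *
    rw [map_star, hx]

/-- A state on a unital complex *-algebra: a linear, unital, positive functional. -/
def IsState {B : Type*} [Ring B] [StarRing B] [Algebra ℂ B] (φ : B → ℂ) : Prop :=
  (∀ x y : B, φ (x + y) = φ x + φ y) ∧
  (∀ (c : ℂ) (x : B), φ (c • x) = c * φ x) ∧
  φ 1 = 1 ∧
  ∀ x : B, 0 ≤ (φ (star x * x)).re ∧ (φ (star x * x)).im = 0

/-! The Cesàro limit `E` is a unital positive projection onto `A^Φ`. It is positive because `Φ`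
preserves the closed positive cone of `A`, and positivity in `A` is positivity in the closed
C⋆-subalgebra `A^Φ` because the square root of a positive element of `A^Φ`, given by the
continuous functional calculus, stays in `A^Φ`. So `φ ∘ E` is a state for every state `φ` of
`A^Φ`; it is invariant because the Cesàro means of `Φ a` and of `a` differ by `(Φⁿ a - a) / n`.
Conversely an invariant state `ω` is continuous and constant on the Cesàro means of `a`, so
`ω ∘ E = ω`, and `E` fixes `A^Φ`, so `(φ ∘ E) ∘ ι = φ`. -/

open scoped ComplexOrder

section State

variable {B : Type*} [Ring B] [StarRing B] [Algebra ℂ B] {φ : B → ℂ}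

lemma IsState.comp_starAlgHom {C : Type*} [Ring C] [StarRing C] [Algebra ℂ C] (h : IsState φ)
    (ψ : C →⋆ₐ[ℂ] B) : IsState (φ ∘ ψ) :=
  ⟨fun x y => by simp [map_add, h.1], fun c x => by simp [map_smul, h.2.1],
    by simp [h.2.2.1], fun x => by simpa [map_mul, map_star] using h.2.2.2 (ψ x)⟩

variable [PartialOrder B] [StarOrderedRing B]

lemma IsState.map_nonneg (h : IsState φ) {x : B} (hx : 0 ≤ x) : 0 ≤ φ x := by
  rw [StarOrderedRing.nonneg_iff] at hx
  induction hx using AddSubmonoid.closure_induction with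
  | mem x hx =>
    obtain ⟨s, rfl⟩ := hx
    exact Complex.nonneg_iff.2 ⟨(h.2.2.2 s).1, (h.2.2.2 s).2.symm⟩
  | zero => rw [show φ 0 = 0 by simpa using h.2.1 0 0]
  | add x y _ _ hx hy => rw [h.1]; exact add_nonneg hx hy

def IsState.toPositiveLinearMap (h : IsState φ) : B →ₚ[ℂ] ℂ :=
  .mk₀ { toFun := φ, map_add' := h.1, map_smul' := h.2.1 } fun _ => h.map_nonneg

lemma PositiveLinearMap.isState (f : B →ₚ[ℂ] ℂ) (hf : f 1 = 1) : IsState f := by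
  refine ⟨map_add f, map_smul f, hf, fun x => ?_⟩
  obtain ⟨hre, him⟩ := Complex.nonneg_iff.1 (f.map_nonneg (star_mul_self_nonneg x))
  exact ⟨hre, him.symm⟩

end State

section Cesaro

variable {𝕜 V : Type*} [RCLike 𝕜] [NormedAddCommGroup V] [NormedSpace 𝕜 V]

def cesaroMean (T : V →ₗ[𝕜] V) (n : ℕ) : V →ₗ[𝕜] V :=
  (n : 𝕜)⁻¹ • ∑ k ∈ Finset.range n, T ^ k

variable (T : V →ₗ[𝕜] V)

lemma cesaroMean_apply (n : ℕ) (v : V) :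
    cesaroMean T n v = (n : 𝕜)⁻¹ • ∑ k ∈ Finset.range n, T^[k] v := by
  simp [cesaroMean, Module.End.pow_apply]

lemma cesaroMean_apply_of_apply_eq_self {n : ℕ} (hn : n ≠ 0) {v : V} (hv : T v = v) :
    cesaroMean T n v = v := by
  have hk : ∀ k, T^[k] v = v := fun k => Function.iterate_fixed hv k
  simp [cesaroMean_apply, hk, ← Nat.cast_smul_eq_nsmul 𝕜, smul_smul, hn]

lemma cesaroMean_apply_map_sub (n : ℕ) (v : V) :
    cesaroMean T n (T v) - cesaroMean T n v = (n : 𝕜)⁻¹ • (T^[n] v - v) := by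
  simp only [cesaroMean_apply, ← smul_sub, ← Finset.sum_sub_distrib]
  congr 1
  simpa only [Function.iterate_succ_apply, Function.iterate_zero_apply] using
    Finset.sum_range_sub (fun k => T^[k] v) n

lemma norm_iterate_apply_le (hT : ∀ v, ‖T v‖ ≤ ‖v‖) (k : ℕ) (v : V) :
    ‖T^[k] v‖ ≤ ‖v‖ := by
  induction k generalizing v with
  | zero => rfl
  | succ k ih => exact (ih (T v)).trans (hT v)

def IsCesaroLimit (T : V →ₗ[𝕜] V) (E : V → V) : Prop :=
  ∀ v, Tendsto (fun n => cesaroMean T n v) atTop (𝓝 (E v))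

namespace IsCesaroLimit

variable {T} {E : V → V} (hE : IsCesaroLimit T E)
include hE

lemma apply_of_apply_eq_self {v : V} (hv : T v = v) : E v = v :=
  tendsto_nhds_unique (hE v) <| tendsto_const_nhds.congr' <|
    (eventually_ne_atTop 0).mono fun _ hn => (cesaroMean_apply_of_apply_eq_self T hn hv).symm

lemma apply_map (hT : ∀ v, ‖T v‖ ≤ ‖v‖) (v : V) : E (T v) = E v := by
  have hsmall : Tendsto (fun n : ℕ => (n : 𝕜)⁻¹ • (T^[n] v - v)) atTop (𝓝 0) := by
    refine squeeze_zero_norm (fun n => ?_) (tendsto_const_div_atTop_nhds_zero_nat (2 * ‖v‖))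
    rw [norm_smul, norm_inv, RCLike.norm_natCast, ← div_eq_inv_mul]
    gcongr
    calc ‖T^[n] v - v‖ ≤ ‖T^[n] v‖ + ‖v‖ := norm_sub_le _ _
      _ ≤ 2 * ‖v‖ := by linarith [norm_iterate_apply_le T hT n v]
  have := ((hE (T v)).sub (hE v)).congr (cesaroMean_apply_map_sub T · v)
  exact sub_eq_zero.1 (tendsto_nhds_unique this hsmall)

lemma map_apply {W : Type*} [AddCommGroup W] [Module 𝕜 W] [TopologicalSpace W] [T2Space W]
    (ℓ : V →ₗ[𝕜] W) (hℓ : Continuous ℓ) (hℓT : ∀ v, ℓ (T v) = ℓ v) (v : V) :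
    ℓ (E v) = ℓ v := by
  have hk : ∀ k, ℓ (T^[k] v) = ℓ v := by
    intro k
    induction k with
    | zero => rfl
    | succ k ih => rw [Function.iterate_succ_apply', hℓT, ih]
  refine tendsto_nhds_unique ((hℓ.tendsto _).comp (hE v)) (tendsto_const_nhds.congr' ?_)
  filter_upwards [eventually_ne_atTop 0] with n hn
  simp [cesaroMean_apply, map_sum, hk, ← Nat.cast_smul_eq_nsmul 𝕜, smul_smul, hn]

def linearMap : V →ₗ[𝕜] V :=
  linearMapOfTendsto E (cesaroMean T) (tendsto_pi_nhds.2 hE)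

end IsCesaroLimit

end Cesaro

section CStarAlgebra

variable {A : Type*} [CStarAlgebra A] [PartialOrder A] [StarOrderedRing A]

lemma StarSubalgebra.exists_eq_star_mul_self (S : StarSubalgebra ℂ A) [IsClosed (S : Set A)]
    {x : A} (hxS : x ∈ S) (hx : 0 ≤ x) : ∃ s ∈ S, x = star s * s := by
  refine ⟨CFC.sqrt x, ?_, ?_⟩
  · rw [CFC.sqrt_eq_real_sqrt x, cfcₙ_eq_cfc]
    exact cfc_mem (𝕜' := ℂ) _ hxS
  · rw [(CFC.sqrt_nonneg x).isSelfAdjoint.star_eq, CFC.sqrt_mul_sqrt_self x]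

instance StarSubalgebra.instStarOrderedRing (S : StarSubalgebra ℂ A) [IsClosed (S : Set A)] :
    StarOrderedRing S :=
  .of_nonneg_iff' (fun h z => add_le_add_right h z) fun x => by
    refine ⟨fun hx => ?_, fun ⟨s, hs⟩ => hs ▸ star_mul_self_nonneg (s : A)⟩
    obtain ⟨s, hsS, hs⟩ := S.exists_eq_star_mul_self x.2 hx
    exact ⟨⟨s, hsS⟩, Subtype.ext hs⟩

lemma IsCesaroLimit.nonneg {T : A →ₗ[ℂ] A} {E : A → A} (hE : IsCesaroLimit T E)
    (hT : ∀ a, 0 ≤ a → 0 ≤ T a) {a : A} (ha : 0 ≤ a) : 0 ≤ E a := by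
  have hk : ∀ k, 0 ≤ T^[k] a := fun k => by
    induction k with
    | zero => exact ha
    | succ k ih => rw [Function.iterate_succ_apply']; exact hT _ ih
  refine ge_of_tendsto' (hE a) fun n => ?_
  rw [cesaroMean_apply]
  exact smul_nonneg (by positivity) (Finset.sum_nonneg fun k _ => hk k)

noncomputable def IsCesaroLimit.positiveLinearMap {T : A →ₗ[ℂ] A} {E : A → A}
    (hE : IsCesaroLimit T E) (hT : ∀ a, 0 ≤ a → 0 ≤ T a) : A →ₚ[ℂ] A :=
  .mk₀ hE.linearMap fun _ => hE.nonneg hT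

noncomputable def PositiveLinearMap.codRestrict {B : Type*} [AddCommGroup B] [Module ℂ B]
    [PartialOrder B] [IsOrderedAddMonoid B] (f : B →ₚ[ℂ] A) (S : StarSubalgebra ℂ A)
    (hf : ∀ x, f x ∈ S) : B →ₚ[ℂ] S :=
  .mk₀ { toFun := fun x => ⟨f x, hf x⟩
         map_add' := fun x y => Subtype.ext (map_add f x y)
         map_smul' := fun c x => Subtype.ext (map_smul f c x) }
    fun _ hx => f.map_nonneg hx

end CStarAlgebra

/-- If `(A, Φ)` is uniquely ergodic with respect to the fixed-point algebra, i.e. the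
Cesàro averages `(1/n)Σ_{k<n}Φ^k(a)` converge in norm to `E a` for every `a`, then the
restriction map `ω ↦ ω∘ι` is an (affine) bijection from the `Φ`-invariant states of `A`
onto the states of `A^Φ`, with inverse `φ ↦ φ∘E`. -/
theorem stmt16 {A : Type*} [NormedRing A] [StarRing A] [CStarRing A] [NormedAlgebra ℂ A]
    [CompleteSpace A] [StarModule ℂ A]
    (Φ : A ≃⋆ₐ[ℂ] A) (E : A → A) (hfix : ∀ a, Φ (E a) = E a)
    (hE : ∀ a : A, Tendsto (fun n : ℕ => (n : ℂ)⁻¹ • ∑ k ∈ Finset.range n, (⇑Φ)^[k] a)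
      atTop (𝓝 (E a))) :
    Set.BijOn (fun (ω : A → ℂ) => ω ∘ (Subtype.val : fixedPts Φ → A))
        {ω : A → ℂ | IsState ω ∧ ∀ a, ω (Φ a) = ω a}
        {φ : fixedPts Φ → ℂ | IsState φ} ∧
      Set.InvOn (fun (φ : fixedPts Φ → ℂ) (a : A) => φ ⟨E a, hfix a⟩)
        (fun (ω : A → ℂ) => ω ∘ (Subtype.val : fixedPts Φ → A))
        {ω : A → ℂ | IsState ω ∧ ∀ a, ω (Φ a) = ω a}
        {φ : fixedPts Φ → ℂ | IsState φ} := by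
  let : CStarAlgebra A := {}
  let := CStarAlgebra.spectralOrder A
  have := CStarAlgebra.spectralOrderedRing A
  have : IsClosed (fixedPts Φ : Set A) := isClosed_eq (map_continuous Φ) continuous_id
  let T : A →ₗ[ℂ] A := Φ.toAlgEquiv.toLinearMap
  have hE' : IsCesaroLimit T E := fun a => (hE a).congr fun n => (cesaroMean_apply T n a).symm
  let Ē := (hE'.positiveLinearMap fun _ => map_nonneg Φ).codRestrict (fixedPts Φ) hfix
  have hLeft : Set.LeftInvOn (fun (φ : fixedPts Φ → ℂ) (a : A) => φ ⟨E a, hfix a⟩)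
      (fun ω => ω ∘ Subtype.val) {ω : A → ℂ | IsState ω ∧ ∀ a, ω (Φ a) = ω a} :=
    fun ω ⟨hω, hωΦ⟩ => funext <|
      hE'.map_apply hω.toPositiveLinearMap.toLinearMap (map_continuous hω.toPositiveLinearMap) hωΦ
  have hRight : Set.RightInvOn (fun (φ : fixedPts Φ → ℂ) (a : A) => φ ⟨E a, hfix a⟩)
      (fun ω => ω ∘ Subtype.val) {φ : fixedPts Φ → ℂ | IsState φ} :=
    fun φ _ => funext fun x => congrArg φ (Subtype.ext (hE'.apply_of_apply_eq_self x.2))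
  have hMapsTo : Set.MapsTo (fun (φ : fixedPts Φ → ℂ) (a : A) => φ ⟨E a, hfix a⟩)
      {φ : fixedPts Φ → ℂ | IsState φ} {ω : A → ℂ | IsState ω ∧ ∀ a, ω (Φ a) = ω a} :=
    fun φ hφ => by
      have hE1 : (⟨E 1, hfix 1⟩ : fixedPts Φ) = 1 :=
        Subtype.ext (hE'.apply_of_apply_eq_self (map_one Φ))
      refine ⟨(hφ.toPositiveLinearMap.comp Ē).isState ?_, fun a => ?_⟩
      · show φ ⟨E 1, hfix 1⟩ = 1
        rw [hE1, hφ.2.2.1]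
      · exact congrArg φ (Subtype.ext (hE'.apply_map (fun b => (StarAlgEquiv.norm_map Φ b).le) a))
  exact ⟨⟨fun ω hω => hω.1.comp_starAlgHom (fixedPts Φ).subtype, hLeft.injOn,
    hRight.surjOn hMapsTo⟩, hLeft, hRight⟩
end
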